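/- There is an absolute constant C > 0 such that for every r > 0 and every t > 0, |C₁(r,t)| ≤ C / t. (Consequently the free Klein–Gordon cosine kernel C₁ obeys the same |t|^{-1} pointwise decay as the free wave equation.) -/

import Mathlib

/-- The Bessel function of the first kind of integer order `n`, defined via the
integral representation `J_n(x) = (1/(2π)) ∫_{-π}^{π} e^{i(n s + x sin s)} ds`. -/
noncomputable def besselJ (n : ℤ) (x : ℝ) : ℝ :=
  (1 / (2 * Real.pi)) *
    (∫ s in (-Real.pi)..Real.pi,
      Complex.exp (Complex.I * ((n : ℂ) * (s : ℂ) + (x : ℂ) * (Real.sin s : ℂ)))).re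

/-- The radial integral kernel of the free Klein–Gordon cosine propagator
`cos(t√(−Δ+1))/(−Δ+1)` on `ℝ³`:
`C₁(r,t) = (1/(4π)) ( r⁻¹ 𝟙_{t<r} − ∫_{max(t,r)}^∞ J_1(√(τ²−r²))/√(τ²−r²) dτ )`. -/
noncomputable def C1 (r t : ℝ) : ℝ :=
  (1 / (4 * Real.pi)) *
    ((if t < r then r⁻¹ else 0) -
      ∫ τ in Set.Ioi (max t r),
        besselJ 1 (Real.sqrt (τ ^ 2 - r ^ 2)) / Real.sqrt (τ ^ 2 - r ^ 2))

/-!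
Write `z = √(τ² - r²)`. In the sign convention of `besselJ` one has `J₀' = J₁`, so
`J₁(z)/z - J₀(z)/τ²` is the derivative of `J₀(z)/τ`. Integrating from `M = max t r` and using
`|J₀| ≤ 1` bounds the integral in `C₁` by `2/M ≤ 2/t`, while the indicator term is at most `1/t`.
The integral converges absolutely because `|J₁(z)| ≤ 3 z^{-1/2}` for `z ≥ 2`; this decay comes from
a Lyapunov function built from `x (J₀² + J₁²)` and `J₀ J₁`, nonincreasing by Bessel's equations.
-/

open MeasureTheory Real Set Filter Topology

lemma abs_inv_two_pi_mul_integral_le {f : ℝ → ℝ} {C : ℝ} (hf : ∀ s, |f s| ≤ C) :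
    |(2 * π)⁻¹ * ∫ s in -π..π, f s| ≤ C := by
  have h := intervalIntegral.norm_integral_le_of_norm_le_const (a := -π) (b := π) (f := f)
    fun s _ => hf s
  rw [norm_eq_abs, abs_of_pos (by linarith [pi_pos] : 0 < π - -π)] at h
  rw [abs_mul, abs_inv, abs_of_pos two_pi_pos, inv_mul_le_iff₀ two_pi_pos]
  linarith

lemma besselJ_eq_integral_cos (n : ℤ) (x : ℝ) :
    besselJ n x = (2 * π)⁻¹ * ∫ s in -π..π, cos (n * s + x * sin s) := by
  have hexp : ∀ s : ℝ, Complex.exp (Complex.I * ((n : ℂ) * s + x * (sin s : ℂ)))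
      = (cos (n * s + x * sin s) : ℂ) + (sin (n * s + x * sin s) : ℂ) * Complex.I := by
    intro s
    rw [mul_comm, ← Complex.ofReal_intCast, ← Complex.ofReal_mul, ← Complex.ofReal_mul,
      ← Complex.ofReal_add, Complex.exp_mul_I, ← Complex.ofReal_cos, ← Complex.ofReal_sin]
  have hint : ∀ f : ℝ → ℝ, Continuous f → IntervalIntegrable (fun s => (f s : ℂ)) volume (-π) π :=
    fun f hf => (Complex.continuous_ofReal.comp hf).intervalIntegrable _ _
  rw [besselJ, one_div, intervalIntegral.integral_congr fun s _ => hexp s,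
    intervalIntegral.integral_add (hint _ (by fun_prop))
      ((hint _ (by fun_prop)).mul_const _),
    intervalIntegral.integral_mul_const, intervalIntegral.integral_ofReal,
    intervalIntegral.integral_ofReal]
  simp

lemma integral_cos_eq_two_pi_mul_besselJ (n : ℤ) (x : ℝ) :
    ∫ s in -π..π, cos (n * s + x * sin s) = 2 * π * besselJ n x := by
  rw [besselJ_eq_integral_cos, mul_inv_cancel_left₀ two_pi_pos.ne']

lemma abs_besselJ_le_one (n : ℤ) (x : ℝ) : |besselJ n x| ≤ 1 := by
  rw [besselJ_eq_integral_cos]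
  exact abs_inv_two_pi_mul_integral_le fun s => abs_cos_le_one _

lemma lipschitzWith_besselJ (n : ℤ) : LipschitzWith 1 (besselJ n) := by
  refine LipschitzWith.of_dist_le_mul fun x y => ?_
  rw [NNReal.coe_one, one_mul, dist_eq_norm, dist_eq_norm, besselJ_eq_integral_cos,
    besselJ_eq_integral_cos, ← mul_sub, ← intervalIntegral.integral_sub
      (by apply Continuous.intervalIntegrable; fun_prop)
      (by apply Continuous.intervalIntegrable; fun_prop)]
  refine abs_inv_two_pi_mul_integral_le fun s => ?_
  calc |cos (n * s + x * sin s) - cos (n * s + y * sin s)|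
      ≤ |x - y| * |sin s| := by
        simpa [← sub_mul, abs_mul] using abs_cos_sub_cos_le (n * s + x * sin s) (n * s + y * sin s)
    _ ≤ ‖x - y‖ := mul_le_of_le_one_right (abs_nonneg _) (abs_sin_le_one s)

lemma besselJ_one_zero : besselJ 1 0 = 0 := by
  simp [besselJ_eq_integral_cos, integral_cos]

lemma abs_besselJ_one_div_self_le_one (z : ℝ) : |besselJ 1 z / z| ≤ 1 := by
  rcases eq_or_ne z 0 with rfl | hz
  · simp
  have h := (lipschitzWith_besselJ 1).dist_le_mul z 0
  rw [besselJ_one_zero, NNReal.coe_one, one_mul, dist_zero_right, dist_zero_right] at h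
  rw [abs_div, div_le_one (abs_pos.2 hz)]
  exact h

lemma hasDerivAt_integral_cos_add_mul_sin (n : ℤ) (x : ℝ) :
    HasDerivAt (fun y => ∫ s in -π..π, cos (n * s + y * sin s))
      (∫ s in -π..π, -(sin s * sin (n * s + x * sin s))) x := by
  refine (intervalIntegral.hasDerivAt_integral_of_dominated_loc_of_deriv_le
    (F := fun y s => cos (n * s + y * sin s)) (F' := fun y s => -(sin s * sin (n * s + y * sin s)))
    (bound := fun _ => 1) (Metric.ball_mem_nhds x one_pos) ?_ ?_ ?_ ?_ ?_ ?_).2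
  · exact .of_forall fun y => (Continuous.aestronglyMeasurable (by fun_prop)).restrict
  · exact Continuous.intervalIntegrable (by fun_prop) _ _
  · exact (Continuous.aestronglyMeasurable (by fun_prop)).restrict
  · refine .of_forall fun s _ y _ => ?_
    rw [norm_neg, norm_mul]
    exact mul_le_one₀ (abs_sin_le_one _) (norm_nonneg _) (abs_sin_le_one _)
  · exact continuous_const.intervalIntegrable _ _
  · refine .of_forall fun s _ y _ => ?_
    have h := ((hasDerivAt_id y).mul_const (sin s)).const_add (n * s)
    simpa [mul_comm] using h.cos

/-- `besselJ n` is the classical `J_{-n}`, so the classical `J_n' = (J_{n-1} - J_{n+1}) / 2`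
appears here with the indices swapped. -/
lemma hasDerivAt_besselJ (n : ℤ) (x : ℝ) :
    HasDerivAt (besselJ n) ((besselJ (n + 1) x - besselJ (n - 1) x) / 2) x := by
  have hJ : besselJ n = fun y => (2 * π)⁻¹ * ∫ s in -π..π, cos (n * s + y * sin s) :=
    funext (besselJ_eq_integral_cos n)
  have hprod : ∀ s, -(sin s * sin (n * s + x * sin s))
      = (cos ((n + 1 : ℤ) * s + x * sin s) - cos ((n - 1 : ℤ) * s + x * sin s)) / 2 := by
    intro s
    push_cast
    rw [show (n + 1 : ℝ) * s + x * sin s = (n * s + x * sin s) + s by ring,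
      show (n - 1 : ℝ) * s + x * sin s = (n * s + x * sin s) - s by ring, cos_add _ s, cos_sub _ s]
    ring
  rw [hJ]
  refine ((hasDerivAt_integral_cos_add_mul_sin n x).const_mul (2 * π)⁻¹).congr_deriv ?_
  rw [intervalIntegral.integral_congr fun s _ => hprod s, intervalIntegral.integral_div,
    intervalIntegral.integral_sub (Continuous.intervalIntegrable (by fun_prop) _ _)
      (Continuous.intervalIntegrable (by fun_prop) _ _),
    integral_cos_eq_two_pi_mul_besselJ, integral_cos_eq_two_pi_mul_besselJ]
  field_simp [pi_ne_zero]

lemma mul_besselJ_sub_one_add_besselJ_add_one (n : ℤ) (x : ℝ) :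
    x * (besselJ (n - 1) x + besselJ (n + 1) x) = -(2 * n * besselJ n x) := by
  -- `(n + x cos s) cos (n s + x sin s)` is the derivative of the `2π`-periodic
  -- function `sin (n s + x sin s)`
  have hderiv : ∀ s ∈ uIcc (-π) π, HasDerivAt (fun s => sin (n * s + x * sin s))
      ((n + x * cos s) * cos (n * s + x * sin s)) s := by
    intro s _
    have h := ((hasDerivAt_id s).const_mul (n : ℝ)).add ((hasDerivAt_sin s).const_mul x)
    simpa [mul_comm] using h.sin
  have hzero := intervalIntegral.integral_eq_sub_of_hasDerivAt hderiv
    (Continuous.intervalIntegrable (by fun_prop) _ _)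
  have hsum : ∀ s, (n + x * cos s) * cos (n * s + x * sin s)
      = n * cos (n * s + x * sin s)
        + x / 2 * (cos ((n - 1 : ℤ) * s + x * sin s) + cos ((n + 1 : ℤ) * s + x * sin s)) := by
    intro s
    push_cast
    rw [show (n + 1 : ℝ) * s + x * sin s = (n * s + x * sin s) + s by ring,
      show (n - 1 : ℝ) * s + x * sin s = (n * s + x * sin s) - s by ring, cos_add _ s, cos_sub _ s]
    ring
  rw [intervalIntegral.integral_congr fun s _ => hsum s,
    intervalIntegral.integral_add (Continuous.intervalIntegrable (by fun_prop) _ _)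
      (Continuous.intervalIntegrable (by fun_prop) _ _),
    intervalIntegral.integral_const_mul, intervalIntegral.integral_const_mul,
    intervalIntegral.integral_add (Continuous.intervalIntegrable (by fun_prop) _ _)
      (Continuous.intervalIntegrable (by fun_prop) _ _),
    integral_cos_eq_two_pi_mul_besselJ, integral_cos_eq_two_pi_mul_besselJ,
    integral_cos_eq_two_pi_mul_besselJ] at hzero
  simp only [sin_pi, mul_zero, add_zero, mul_neg, sin_neg, neg_zero, sin_int_mul_pi,
    sub_zero] at hzero
  have := pi_pos
  nlinarith

lemma hasDerivAt_besselJ_zero {x : ℝ} (hx : x ≠ 0) : HasDerivAt (besselJ 0) (besselJ 1 x) x := by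
  have hrec := mul_besselJ_sub_one_add_besselJ_add_one 0 x
  have hneg : besselJ (-1) x = -besselJ 1 x := by
    simp only [zero_sub, zero_add, Int.cast_zero, mul_zero, zero_mul, neg_zero,
      mul_eq_zero, hx, false_or] at hrec
    linarith
  convert hasDerivAt_besselJ 0 x using 1
  simp [hneg]

lemma hasDerivAt_besselJ_one {x : ℝ} (hx : x ≠ 0) :
    HasDerivAt (besselJ 1) (-besselJ 0 x - besselJ 1 x / x) x := by
  have hJ2 : besselJ 2 x = -(2 * besselJ 1 x / x) - besselJ 0 x := by
    have hrec := mul_besselJ_sub_one_add_besselJ_add_one 1 x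
    norm_num at hrec
    field_simp
    linarith
  convert hasDerivAt_besselJ 1 x using 1
  rw [show (1 : ℤ) + 1 = 2 by norm_num, sub_self, hJ2]
  ring

/-- With `E = J₀² + J₁²`, one has `(x E + J₀ J₁)' = -J₀ J₁ / x`; the factor `1 + 1/x`
turns this into a nonincreasing quantity on `[2, ∞)`. -/
noncomputable def besselLyapunov (x : ℝ) : ℝ :=
  (1 + x⁻¹) * (x * (besselJ 0 x ^ 2 + besselJ 1 x ^ 2) + besselJ 0 x * besselJ 1 x)

lemma hasDerivAt_besselLyapunov {x : ℝ} (hx : x ≠ 0) :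
    HasDerivAt besselLyapunov
      (-(x * (besselJ 0 x ^ 2 + besselJ 1 x ^ 2) + (x + 2) * (besselJ 0 x * besselJ 1 x))
        / x ^ 2) x := by
  have h0 := hasDerivAt_besselJ_zero hx
  have h1 := hasDerivAt_besselJ_one hx
  have h := ((hasDerivAt_inv hx).const_add 1).mul
    (((hasDerivAt_id x).mul ((h0.pow 2).add (h1.pow 2))).add (h0.mul h1))
  refine h.congr_deriv ?_
  simp only [Pi.add_apply, Pi.mul_apply, Pi.pow_apply, id]
  field_simp
  ring

lemma antitoneOn_besselLyapunov : AntitoneOn besselLyapunov (Ici 2) := by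
  have hpos : ∀ x ∈ Ici (2 : ℝ), x ≠ 0 := fun x hx => (zero_lt_two.trans_le hx).ne'
  refine antitoneOn_of_deriv_nonpos (convex_Ici 2)
    (fun x hx => (hasDerivAt_besselLyapunov (hpos x hx)).continuousAt.continuousWithinAt)
    (fun x hx => ?_) (fun x hx => ?_) <;> rw [interior_Ici] at hx
  · exact (hasDerivAt_besselLyapunov (hpos x (mem_Ici_of_Ioi hx))).differentiableAt
      |>.differentiableWithinAt
  rw [(hasDerivAt_besselLyapunov (hpos x (mem_Ici_of_Ioi hx))).deriv]
  simp only [mem_Ioi] at hx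
  refine div_nonpos_of_nonpos_of_nonneg (neg_nonpos.2 ?_) (sq_nonneg x)
  -- `|J₀ J₁| ≤ (J₀² + J₁²) / 2` and `x ≥ (x + 2) / 2`
  nlinarith [mul_nonneg (by linarith : (0 : ℝ) ≤ x + 2) (sq_nonneg (besselJ 0 x + besselJ 1 x)),
    mul_nonneg (by linarith : (0 : ℝ) ≤ x - 2)
      (add_nonneg (sq_nonneg (besselJ 0 x)) (sq_nonneg (besselJ 1 x)))]

lemma sq_besselJ_le_one (n : ℤ) (x : ℝ) : besselJ n x ^ 2 ≤ 1 :=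
  (sq_le_one_iff_abs_le_one _).2 (abs_besselJ_le_one n x)

lemma mul_besselJ_sq_add_sq_le {x : ℝ} (hx : 2 ≤ x) :
    x * (besselJ 0 x ^ 2 + besselJ 1 x ^ 2) ≤ 9 := by
  have hmono := antitoneOn_besselLyapunov (self_mem_Ici) hx hx
  have hstart : besselLyapunov 2 ≤ 15 / 2 := by
    simp only [besselLyapunov]
    nlinarith [sq_besselJ_le_one 0 2, sq_besselJ_le_one 1 2,
      sq_nonneg (besselJ 0 2 - besselJ 1 2)]
  set a := besselJ 0 x
  set b := besselJ 1 x
  have hlow : x * (a ^ 2 + b ^ 2) + a * b ≤ besselLyapunov x := by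
    have hnonneg : 0 ≤ x * (a ^ 2 + b ^ 2) + a * b := by
      nlinarith [sq_nonneg (a + b), sq_nonneg a, sq_nonneg b]
    have hinv : 0 ≤ x⁻¹ := by positivity
    calc x * (a ^ 2 + b ^ 2) + a * b ≤ (1 + x⁻¹) * (x * (a ^ 2 + b ^ 2) + a * b) :=
          le_mul_of_one_le_left hnonneg (by linarith)
      _ = besselLyapunov x := rfl
  nlinarith [sq_besselJ_le_one 0 x, sq_besselJ_le_one 1 x, sq_nonneg (a + b)]

lemma abs_besselJ_one_le_rpow {x : ℝ} (hx : 2 ≤ x) : |besselJ 1 x| ≤ 3 * x ^ (-(1 / 2) : ℝ) := by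
  have hx0 : 0 < x := by linarith
  have hsq : (besselJ 1 x * √x) ^ 2 ≤ 3 ^ 2 := by
    rw [mul_pow, sq_sqrt hx0.le]
    nlinarith [mul_besselJ_sq_add_sq_le hx, sq_nonneg (besselJ 0 x)]
  rw [rpow_neg hx0.le, ← sqrt_eq_rpow, ← div_eq_mul_inv, le_div_iff₀ (sqrt_pos.2 hx0),
    ← abs_of_pos (sqrt_pos.2 hx0), ← abs_mul]
  exact abs_le_of_sq_le_sq hsq (by norm_num)

lemma abs_besselJ_one_sqrt_div_le_rpow {r τ : ℝ} (hr : 2 * |r| ≤ τ) (hτ : 4 ≤ τ) :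
    |besselJ 1 √(τ ^ 2 - r ^ 2) / √(τ ^ 2 - r ^ 2)| ≤ 3 * 2 ^ (3 / 2 : ℝ) * τ ^ (-(3 / 2) : ℝ) := by
  set z := √(τ ^ 2 - r ^ 2)
  have hτz : τ / 2 ≤ z := by
    refine le_sqrt_of_sq_le ?_
    nlinarith [sq_abs r, abs_nonneg r]
  have hz : 2 ≤ z := by linarith
  have hz0 : 0 < z := by linarith
  calc |besselJ 1 z / z| = |besselJ 1 z| / z := by rw [abs_div, abs_of_pos hz0]
    _ ≤ 3 * z ^ (-(1 / 2) : ℝ) / z :=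
        div_le_div_of_nonneg_right (abs_besselJ_one_le_rpow hz) hz0.le
    _ = 3 * z ^ (-(3 / 2) : ℝ) := by
        rw [mul_div_assoc, ← rpow_sub_one hz0.ne']
        norm_num
    _ ≤ 3 * (τ / 2) ^ (-(3 / 2) : ℝ) :=
        mul_le_mul_of_nonneg_left (rpow_le_rpow_of_nonpos (by linarith) hτz (by norm_num))
          zero_le_three
    _ = 3 * 2 ^ (3 / 2 : ℝ) * τ ^ (-(3 / 2) : ℝ) := by
        rw [div_rpow (by linarith) zero_le_two, rpow_neg zero_le_two]
        field_simp

lemma integrableOn_besselJ_one_sqrt_div (r a : ℝ) :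
    IntegrableOn (fun τ => besselJ 1 √(τ ^ 2 - r ^ 2) / √(τ ^ 2 - r ^ 2)) (Ioi a) := by
  have hsqrt : Continuous fun τ : ℝ => √(τ ^ 2 - r ^ 2) := by fun_prop
  have hmeas : Measurable fun τ => besselJ 1 √(τ ^ 2 - r ^ 2) / √(τ ^ 2 - r ^ 2) :=
    ((lipschitzWith_besselJ 1).continuous.comp hsqrt).measurable.div hsqrt.measurable
  have hloc : LocallyIntegrable (fun τ => besselJ 1 √(τ ^ 2 - r ^ 2) / √(τ ^ 2 - r ^ 2)) :=
    (locallyIntegrable_const (1 : ℝ)).mono hmeas.aestronglyMeasurable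
      (.of_forall fun τ => by rw [norm_one]; exact abs_besselJ_one_div_self_le_one _)
  refine IntegrableOn.mono_set ?_ Ioi_subset_Ici_self
  refine (hloc.locallyIntegrableOn _).integrableOn_of_isBigO_atTop
    (g := fun τ => τ ^ (-(3 / 2) : ℝ)) (Asymptotics.IsBigO.of_bound (3 * 2 ^ (3 / 2 : ℝ)) ?_)
    (integrableAtFilter_rpow_atTop_iff.2 (by norm_num))
  filter_upwards [eventually_ge_atTop (max (2 * |r|) 4)] with τ hτ
  have hτ0 : 0 < τ := by linarith [le_max_right (2 * |r|) 4]
  rw [norm_eq_abs, norm_eq_abs, abs_of_pos (rpow_pos_of_pos hτ0 _)]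
  exact abs_besselJ_one_sqrt_div_le_rpow (le_of_max_le_left hτ) (le_of_max_le_right hτ)

lemma norm_div_sq_le_rpow {a τ : ℝ} (ha : |a| ≤ 1) (hτ : 0 < τ) : ‖a / τ ^ 2‖ ≤ τ ^ (-2 : ℝ) := by
  rw [norm_eq_abs, abs_div, abs_of_pos (pow_pos hτ 2), rpow_neg hτ.le, rpow_two, ← one_div]
  exact div_le_div_of_nonneg_right ha (by positivity)

lemma integrableOn_Ioi_div_sq {f : ℝ → ℝ} (hmeas : Measurable f) (hf : ∀ τ, |f τ| ≤ 1)
    {M : ℝ} (hM : 0 < M) : IntegrableOn (fun τ => f τ / τ ^ 2) (Ioi M) := by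
  refine (integrableOn_Ioi_rpow_of_lt (a := -2) (by norm_num) hM).mono'
    (hmeas.div (by fun_prop)).aestronglyMeasurable.restrict ?_
  filter_upwards [self_mem_ae_restrict measurableSet_Ioi] with τ hτ
  exact norm_div_sq_le_rpow (hf τ) (hM.trans hτ)

lemma abs_integral_Ioi_div_sq_le {f : ℝ → ℝ} (hf : ∀ τ, |f τ| ≤ 1) {M : ℝ} (hM : 0 < M) :
    |∫ τ in Ioi M, f τ / τ ^ 2| ≤ 1 / M := by
  have h := norm_integral_le_of_norm_le (integrableOn_Ioi_rpow_of_lt (by norm_num) hM)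
    ((ae_restrict_iff' measurableSet_Ioi).2 (.of_forall fun τ hτ =>
      norm_div_sq_le_rpow (hf τ) (hM.trans hτ)))
  rw [integral_Ioi_rpow_of_lt (by norm_num) hM] at h
  norm_num [rpow_neg_one] at h
  simpa using h

lemma hasDerivAt_besselJ_zero_sqrt_div {r τ : ℝ} (hτ : |r| < τ) :
    HasDerivAt (fun y => besselJ 0 √(y ^ 2 - r ^ 2) / y)
      (besselJ 1 √(τ ^ 2 - r ^ 2) / √(τ ^ 2 - r ^ 2) - besselJ 0 √(τ ^ 2 - r ^ 2) / τ ^ 2) τ := by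
  have hτ0 : 0 < τ := (abs_nonneg r).trans_lt hτ
  have hpos : 0 < τ ^ 2 - r ^ 2 := by nlinarith [sq_abs r, abs_nonneg r]
  have hz : 0 < √(τ ^ 2 - r ^ 2) := sqrt_pos.2 hpos
  have hsqrt : HasDerivAt (fun y => √(y ^ 2 - r ^ 2)) (τ / √(τ ^ 2 - r ^ 2)) τ := by
    convert ((hasDerivAt_pow 2 τ).sub_const (r ^ 2)).sqrt hpos.ne' using 1
    field_simp
    ring
  refine (((hasDerivAt_besselJ_zero hz.ne').comp τ hsqrt).div (hasDerivAt_id τ)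
    hτ0.ne').congr_deriv ?_
  simp only [Function.comp_apply, id]
  field_simp

lemma integral_besselJ_one_sqrt_div_eq {r M : ℝ} (hM : 0 < M) (hrM : |r| ≤ M) :
    ∫ τ in Ioi M, besselJ 1 √(τ ^ 2 - r ^ 2) / √(τ ^ 2 - r ^ 2)
      = (∫ τ in Ioi M, besselJ 0 √(τ ^ 2 - r ^ 2) / τ ^ 2) - besselJ 0 √(M ^ 2 - r ^ 2) / M := by
  have hJ0 : Continuous fun τ : ℝ => besselJ 0 √(τ ^ 2 - r ^ 2) :=
    (lipschitzWith_besselJ 0).continuous.comp (by fun_prop)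
  have hint := integrableOn_Ioi_div_sq hJ0.measurable (fun τ => abs_besselJ_le_one 0 _) hM
  have hlim : Tendsto (fun y => besselJ 0 √(y ^ 2 - r ^ 2) / y) atTop (𝓝 0) := by
    refine squeeze_zero_norm' ?_ tendsto_inv_atTop_zero
    filter_upwards [eventually_gt_atTop 0] with y hy
    rw [norm_div, norm_of_nonneg hy.le, div_eq_mul_inv]
    exact mul_le_of_le_one_left (inv_nonneg.2 hy.le) (abs_besselJ_le_one 0 _)
  have hftc := integral_Ioi_of_hasDerivAt_of_tendsto
    ((hJ0.continuousAt.div continuousAt_id hM.ne').continuousWithinAt)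
    (fun τ hτ => hasDerivAt_besselJ_zero_sqrt_div (hrM.trans_lt hτ))
    ((integrableOn_besselJ_one_sqrt_div r M).sub hint) hlim
  rw [integral_sub (integrableOn_besselJ_one_sqrt_div r M) hint] at hftc
  simp only [Pi.div_apply, id] at hftc
  linarith

lemma abs_integral_besselJ_one_sqrt_div_le {r M : ℝ} (hM : 0 < M) (hrM : |r| ≤ M) :
    |∫ τ in Ioi M, besselJ 1 √(τ ^ 2 - r ^ 2) / √(τ ^ 2 - r ^ 2)| ≤ 2 / M := by
  rw [integral_besselJ_one_sqrt_div_eq hM hrM]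
  have hboundary : |besselJ 0 √(M ^ 2 - r ^ 2) / M| ≤ 1 / M := by
    rw [abs_div, abs_of_pos hM]
    exact div_le_div_of_nonneg_right (abs_besselJ_le_one 0 _) hM.le
  calc _ ≤ 1 / M + 1 / M :=
        (abs_sub _ _).trans (add_le_add
          (abs_integral_Ioi_div_sq_le (fun τ => abs_besselJ_le_one 0 _) hM) hboundary)
    _ = 2 / M := by ring

/-- There is an absolute constant `C > 0` such that for every `r > 0` and every `t > 0`,
`|C₁(r,t)| ≤ C / t`: the free Klein–Gordon cosine kernel obeys the same `|t|⁻¹`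
pointwise decay as the free wave equation. -/
theorem C1_pointwise_t_decay :
    ∃ C : ℝ, 0 < C ∧ ∀ r t : ℝ, 0 < r → 0 < t → |C1 r t| ≤ C / t := by
  refine ⟨1, one_pos, fun r t hr ht => ?_⟩
  have hM : 0 < max t r := lt_max_of_lt_left ht
  have hintegral := abs_integral_besselJ_one_sqrt_div_le hM
    ((abs_of_pos hr).trans_le (le_max_right t r))
  have hindicator : |if t < r then r⁻¹ else 0| ≤ 1 / t := by
    split_ifs with h
    · rw [abs_of_pos (inv_pos.2 hr), one_div]
      exact inv_anti₀ ht h.le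
    · simpa using ht.le
  have hmax : 2 / max t r ≤ 2 / t := div_le_div_of_nonneg_left zero_le_two ht (le_max_left t r)
  rw [C1, abs_mul, abs_of_pos (by positivity)]
  calc 1 / (4 * π) * |(if t < r then r⁻¹ else 0) -
        ∫ τ in Ioi (max t r), besselJ 1 √(τ ^ 2 - r ^ 2) / √(τ ^ 2 - r ^ 2)|
      ≤ 1 / (4 * π) * (1 / t + 2 / t) := by
        gcongr
        exact (abs_sub _ _).trans (add_le_add hindicator (hintegral.trans hmax))
    _ = 3 / (4 * π) / t := by ring
    _ ≤ 1 / t := by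
        gcongr
        rw [div_le_one (by positivity)]
        linarith [pi_gt_three]
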